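/- Let γ ∈ H²(𝕋¹; ℝ³) have unit speed, and define δ(x,y) by |γ(x)-γ(y)|² = (1 - δ(x,y))·ϑ(x-y)². Then δ(x,y) ≤ √(2π)·‖γ''‖_{L²(𝕋¹)}·ϑ(x-y)^{1/2} for all x,y ∈ 𝕋¹. -/

import Mathlib

/-!
Fix the tangent `γ'(a)`. Cauchy–Schwarz gives `|γ'(t) - γ'(a)|² ≤ (t - a) ∫ₐᵇ |γ''|²`, and for
unit vectors `⟨γ'(a), γ'(t)⟩ = 1 - |γ'(t) - γ'(a)|² / 2`; integrating over `[a, b]` yields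
`|γ(b) - γ(a)| ≥ ⟨γ'(a), γ(b) - γ(a)⟩ ≥ (b - a) - (b - a)² ∫ₐᵇ |γ''|² / 4`, which is the claim
after squaring. By periodicity one may take `b - a = ϑ(x - y) ≤ π`, so that
`∫ₐᵇ |γ''|² ≤ ∫_{𝕋¹} |γ''|²`.
-/

open MeasureTheory Real

/-- Geodesic distance on the torus `𝕋¹ = [-π,π]` with endpoints identified. -/
noncomputable def vartheta (z : ℝ) : ℝ :=
  |z - 2 * π * ((round (z / (2 * π)) : ℤ) : ℝ)|

variable {E : Type*} [NormedAddCommGroup E]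

theorem sq_intervalIntegral_norm_le {f : ℝ → E} {a b : ℝ} (hab : a ≤ b)
    (hf : MemLp f 2 (volume.restrict (Set.Ioc a b))) :
    (∫ t in a..b, ‖f t‖) ^ 2 ≤ (b - a) * ∫ t in a..b, ‖f t‖ ^ 2 := by
  have holder := integral_mul_norm_le_Lp_mul_Lq (μ := volume.restrict (Set.Ioc a b))
    HolderConjugate.two_two (by simpa using hf.norm) (by simpa using memLp_const (1 : ℝ))
  simp only [norm_norm, norm_one, mul_one, one_pow, integral_const, measureReal_restrict_apply_univ,
    Real.volume_real_Ioc_of_le hab, smul_eq_mul, ← sqrt_eq_rpow, rpow_two] at holder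
  rw [intervalIntegral.integral_of_le hab, intervalIntegral.integral_of_le hab]
  calc (∫ t in Set.Ioc a b, ‖f t‖) ^ 2
      ≤ (√(∫ t in Set.Ioc a b, ‖f t‖ ^ 2) * √(b - a)) ^ 2 :=
        pow_le_pow_left₀ (integral_nonneg fun _ ↦ norm_nonneg _) holder 2
    _ = (b - a) * ∫ t in Set.Ioc a b, ‖f t‖ ^ 2 := by
        rw [mul_pow, sq_sqrt (integral_nonneg fun _ ↦ by positivity), sq_sqrt (by linarith),
          mul_comm]

theorem norm_sub_sq_le_of_eq_intervalIntegral [NormedSpace ℝ E] {f f' : ℝ → E} {a b : ℝ}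
    (hab : a ≤ b) (hf : f b - f a = ∫ t in a..b, f' t)
    (hf' : MemLp f' 2 (volume.restrict (Set.Ioc a b))) :
    ‖f b - f a‖ ^ 2 ≤ (b - a) * ∫ t in a..b, ‖f' t‖ ^ 2 := by
  rw [hf]
  exact (pow_le_pow_left₀ (norm_nonneg _)
    (intervalIntegral.norm_integral_le_integral_norm hab) 2).trans
    (sq_intervalIntegral_norm_le hab hf')

theorem intervalIntegral_one_sub_sub_mul_div_two (a b C : ℝ) :
    ∫ t in a..b, (1 - (t - a) * C / 2) = (b - a) - C * (b - a) ^ 2 / 4 := by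
  rw [intervalIntegral.integral_sub intervalIntegrable_const
      ((by fun_prop : Continuous fun t : ℝ ↦ (t - a) * C / 2).intervalIntegrable a b),
    intervalIntegral.integral_div, intervalIntegral.integral_mul_const,
    intervalIntegral.integral_comp_sub_right (fun t ↦ t), integral_id]
  simp
  ring

theorem sq_sub_sq_le_of_sub_le {w N C : ℝ} (hw : 0 ≤ w) (hC : 0 ≤ C) (hN : 0 ≤ N)
    (h : w - C * w ^ 2 / 4 ≤ N) :
    w ^ 2 - N ^ 2 ≤ √C * √w * w ^ 2 := by
  rw [← sqrt_mul hC]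
  have hs : √(C * w) ^ 2 = C * w := sq_sqrt (mul_nonneg hC hw)
  have hs0 : 0 ≤ √(C * w) := sqrt_nonneg _
  rcases le_or_gt 1 √(C * w) with hbig | hsmall
  · nlinarith [sq_nonneg w, sq_nonneg N]
  rcases le_or_gt w N with hNw | hNw
  · nlinarith [sq_nonneg w]
  -- `w² - N² = (w - N)(w + N) ≤ (C w² / 4)(2 w) = (C w) w² / 2`, and `C w ≤ √(C w)` as `C w < 1`
  have hprod : w ^ 2 - N ^ 2 ≤ C * w ^ 2 / 4 * (2 * w) := by nlinarith
  nlinarith [mul_nonneg (mul_nonneg hs0 (sub_nonneg.2 hsmall.le)) (sq_nonneg w)]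

section InnerProductSpace

variable [InnerProductSpace ℝ E] [CompleteSpace E]

theorem sub_sub_le_norm_sub_of_norm_deriv_eq_one {γ γ' : ℝ → E} {a b C : ℝ} (hab : a ≤ b)
    (hγ' : IntervalIntegrable γ' volume a b) (hγ : γ b - γ a = ∫ t in a..b, γ' t)
    (hspeed : ∀ t ∈ Set.Icc a b, ‖γ' t‖ = 1)
    (hbend : ∀ t ∈ Set.Icc a b, ‖γ' t - γ' a‖ ^ 2 ≤ (t - a) * C) :
    (b - a) - C * (b - a) ^ 2 / 4 ≤ ‖γ b - γ a‖ := by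
  have hspeed_a : ‖γ' a‖ = 1 := hspeed a ⟨le_rfl, hab⟩
  have hinner : ∀ t ∈ Set.Icc a b, inner ℝ (γ' a) (γ' t) = 1 - ‖γ' t - γ' a‖ ^ 2 / 2 := by
    intro t ht
    rw [norm_sub_sq_real, hspeed t ht, hspeed_a, real_inner_comm]
    ring
  calc (b - a) - C * (b - a) ^ 2 / 4 = ∫ t in a..b, (1 - (t - a) * C / 2) :=
        (intervalIntegral_one_sub_sub_mul_div_two a b C).symm
    _ ≤ ∫ t in a..b, inner ℝ (γ' a) (γ' t) := by
        refine intervalIntegral.integral_mono_on hab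
          ((by fun_prop : Continuous fun t ↦ 1 - (t - a) * C / 2).intervalIntegrable _ _)
          ⟨hγ'.1.const_inner _, hγ'.2.const_inner _⟩ fun t ht ↦ ?_
        rw [hinner t ht]
        linarith [hbend t ht]
    _ = inner ℝ (γ' a) (γ b - γ a) := by
        rw [hγ]
        exact (innerSL ℝ (γ' a)).intervalIntegral_comp_comm hγ'
    _ ≤ ‖γ b - γ a‖ := by
        simpa [hspeed_a] using real_inner_le_norm (γ' a) (γ b - γ a)

theorem sq_sub_sq_norm_sub_le_of_norm_deriv_eq_one {γ γ' γ'' : ℝ → E} {a b : ℝ} (hab : a ≤ b)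
    (hγ' : IntervalIntegrable γ' volume a b) (hγ : γ b - γ a = ∫ t in a..b, γ' t)
    (hγ'' : ∀ t ∈ Set.Icc a b, γ' t - γ' a = ∫ s in a..t, γ'' s)
    (hL2 : MemLp γ'' 2 (volume.restrict (Set.Ioc a b)))
    (hspeed : ∀ t ∈ Set.Icc a b, ‖γ' t‖ = 1) :
    (b - a) ^ 2 - ‖γ b - γ a‖ ^ 2 ≤
      √(∫ t in a..b, ‖γ'' t‖ ^ 2) * √(b - a) * (b - a) ^ 2 := by
  have hbend : ∀ t ∈ Set.Icc a b,
      ‖γ' t - γ' a‖ ^ 2 ≤ (t - a) * ∫ s in a..b, ‖γ'' s‖ ^ 2 := by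
    intro t ht
    have hL2t := hL2.mono_measure (Measure.restrict_mono (Set.Ioc_subset_Ioc le_rfl ht.2) le_rfl)
    refine (norm_sub_sq_le_of_eq_intervalIntegral ht.1 (hγ'' t ht) hL2t).trans ?_
    refine mul_le_mul_of_nonneg_left ?_ (sub_nonneg.2 ht.1)
    refine intervalIntegral.integral_mono_interval le_rfl ht.1 ht.2
      (ae_of_all _ fun _ ↦ by positivity) ?_
    exact (intervalIntegrable_iff_integrableOn_Ioc_of_le hab).2
      (hL2.integrable_norm_pow two_ne_zero)
  exact sq_sub_sq_le_of_sub_le (sub_nonneg.2 hab)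
    (intervalIntegral.integral_nonneg hab fun _ _ ↦ by positivity) (norm_nonneg _)
    (sub_sub_le_norm_sub_of_norm_deriv_eq_one hab hγ' hγ hspeed hbend)

end InnerProductSpace

theorem Function.Periodic.intervalIntegral_le_of_nonneg {g : ℝ → ℝ} {T : ℝ}
    (hg : Function.Periodic g T) (hg0 : ∀ t, 0 ≤ g t) {a b : ℝ}
    (hgi : IntervalIntegrable g volume a (a + T)) (hab : a ≤ b) (hbT : b ≤ a + T) (t : ℝ) :
    ∫ s in a..b, g s ≤ ∫ s in t..t + T, g s :=
  (intervalIntegral.integral_mono_interval le_rfl hab hbT (ae_of_all _ hg0) hgi).trans_eq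
    (hg.intervalIntegral_add_eq a t)

theorem vartheta_le_pi (z : ℝ) : vartheta z ≤ π := by
  have hround := abs_sub_round (z / (2 * π))
  have hscale : vartheta z = 2 * π * |z / (2 * π) - round (z / (2 * π))| := by
    rw [vartheta, ← abs_of_pos two_pi_pos, ← abs_mul, abs_of_pos two_pi_pos, mul_sub,
      mul_div_cancel₀ _ two_pi_pos.ne']
  rw [hscale]
  nlinarith [pi_pos]

theorem Function.Periodic.exists_norm_sub_eq_of_vartheta {f : ℝ → E}
    (hf : Function.Periodic f (2 * π)) (x y : ℝ) :
    ∃ a b, a ≤ b ∧ b - a = vartheta (x - y) ∧ ‖f x - f y‖ = ‖f b - f a‖ := by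
  set w := x - y - 2 * π * (round ((x - y) / (2 * π)) : ℤ)
  have hfx : f x = f (y + w) := by
    rw [show y + w = x - (round ((x - y) / (2 * π)) : ℤ) * (2 * π) by simp only [w]; ring,
      hf.sub_int_mul_eq]
  have hw : vartheta (x - y) = |w| := rfl
  rcases le_or_gt 0 w with hw0 | hw0
  · exact ⟨y, y + w, by linarith, by rw [hw, abs_of_nonneg hw0]; ring, by rw [hfx]⟩
  · exact ⟨y + w, y, by linarith, by rw [hw, abs_of_neg hw0]; ring, by rw [hfx, norm_sub_rev]⟩

theorem stmt5_general (γ γ' γ'' : ℝ → EuclideanSpace ℝ (Fin 3))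
    (hper : Function.Periodic γ (2 * π))
    (hper'' : Function.Periodic γ'' (2 * π))
    (hInt' : ∀ a b : ℝ, IntervalIntegrable γ' volume a b)
    (hInt'' : ∀ a b : ℝ, IntervalIntegrable γ'' volume a b)
    (hFTC : ∀ a b : ℝ, γ b - γ a = ∫ x in a..b, γ' x)
    (hFTC' : ∀ a b : ℝ, γ' b - γ' a = ∫ x in a..b, γ'' x)
    (hL2 : MemLp γ'' 2 (volume.restrict (Set.Ioc (-π) π)))
    (hspeed : ∀ x, ‖γ' x‖ = 1) :
    ∀ x y : ℝ,
      vartheta (x - y) ^ 2 - ‖γ x - γ y‖ ^ 2 ≤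
        Real.sqrt (2 * π) * Real.sqrt ((1 / (2 * π)) * ∫ t in (-π)..π, ‖γ'' t‖ ^ 2) *
          vartheta (x - y) ^ ((1 : ℝ) / 2) * vartheta (x - y) ^ 2 := by
  intro x y
  have hsq_per : Function.Periodic (fun t ↦ ‖γ'' t‖ ^ 2) (2 * π) := hper''.comp (‖·‖ ^ 2)
  have hsq_int : ∀ a b, IntervalIntegrable (fun t ↦ ‖γ'' t‖ ^ 2) volume a b := by
    refine hsq_per.intervalIntegrable two_pi_pos.ne' (t := -π) ?_
    rw [show -π + 2 * π = π by ring,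
      intervalIntegrable_iff_integrableOn_Ioc_of_le (by linarith [pi_pos])]
    exact hL2.integrable_norm_pow two_ne_zero
  obtain ⟨a, b, hab, hba, hchord⟩ := hper.exists_norm_sub_eq_of_vartheta x y
  have hL2ab : MemLp γ'' 2 (volume.restrict (Set.Ioc a b)) :=
    (memLp_two_iff_integrable_sq_norm (hInt'' a b).1.aestronglyMeasurable).2 (hsq_int a b).1
  have hcurvature : ∫ t in a..b, ‖γ'' t‖ ^ 2 ≤ ∫ t in (-π)..π, ‖γ'' t‖ ^ 2 := by
    have := hsq_per.intervalIntegral_le_of_nonneg (fun _ ↦ by positivity) (hsq_int a (a + 2 * π))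
      hab (by linarith [vartheta_le_pi (x - y), pi_pos]) (-π)
    rwa [show -π + 2 * π = π by ring] at this
  have hconst : √(2 * π) * √(1 / (2 * π) * ∫ t in (-π)..π, ‖γ'' t‖ ^ 2) =
      √(∫ t in (-π)..π, ‖γ'' t‖ ^ 2) := by
    rw [← sqrt_mul two_pi_pos.le, ← mul_assoc, mul_one_div_cancel two_pi_pos.ne', one_mul]
  rw [← hba, hchord, hconst, ← sqrt_eq_rpow]
  refine (sq_sub_sq_norm_sub_le_of_norm_deriv_eq_one hab (hInt' a b) (hFTC a b)
    (fun t _ ↦ hFTC' a t) hL2ab (fun t _ ↦ hspeed t)).trans ?_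
  gcongr

/-- Let `γ ∈ H²(𝕋¹;ℝ³)` have unit speed, and define `δ(x,y)` by
`|γ(x)-γ(y)|² = (1-δ(x,y))·ϑ(x-y)²`.  Then `δ(x,y) ≤ √(2π)·‖γ''‖_{L²}·ϑ(x-y)^{1/2}`;
equivalently (after multiplying through by `ϑ(x-y)²`):
`ϑ(x-y)² - |γ(x)-γ(y)|² ≤ √(2π)·‖γ''‖_{L²}·ϑ(x-y)^{1/2}·ϑ(x-y)²`. -/
theorem stmt5 (γ γ' γ'' : ℝ → EuclideanSpace ℝ (Fin 3))
    (hper : Function.Periodic γ (2 * π))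
    (hper' : Function.Periodic γ' (2 * π))
    (hper'' : Function.Periodic γ'' (2 * π))
    (hInt' : ∀ a b : ℝ, IntervalIntegrable γ' volume a b)
    (hInt'' : ∀ a b : ℝ, IntervalIntegrable γ'' volume a b)
    (hFTC : ∀ a b : ℝ, γ b - γ a = ∫ x in a..b, γ' x)
    (hFTC' : ∀ a b : ℝ, γ' b - γ' a = ∫ x in a..b, γ'' x)
    (hL2 : MemLp γ'' 2 (volume.restrict (Set.Ioc (-π) π)))
    (hspeed : ∀ x, ‖γ' x‖ = 1) :
    ∀ x y : ℝ,
      vartheta (x - y) ^ 2 - ‖γ x - γ y‖ ^ 2 ≤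
        Real.sqrt (2 * π) * Real.sqrt ((1 / (2 * π)) * ∫ t in (-π)..π, ‖γ'' t‖ ^ 2) *
          vartheta (x - y) ^ ((1 : ℝ) / 2) * vartheta (x - y) ^ 2 :=
  stmt5_general γ γ' γ'' hper hper'' hInt' hInt'' hFTC hFTC' hL2 hspeed
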